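/- arXiv:1909.01219 — 3 statements merged into one kernel-verified Lean document; each statement's English description precedes it below -/
import Mathlib

section
/- Let $u_0, u_1$ be positive integers and $\lambda = $ an appropriate Lagrange multiplier. The critical equation $\frac{3u_0 + 2u_1}{p_0} = \lambda(3p_0^2 + 2p_0)$ arising from maximizing $\mathcal{L} = (3u_0 + 2u_1)\log p_0$ subject to $p_0^3 + p_0^2 = 1$ is equivalent to a cubic polynomial equation in $p_0$, which has exactly $3$ complex roots counted with multiplicity; hence the ML degree of $V(y^3 - x^2)$ (with $K_e = 1$) is $3$. -/
open Polynomial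

/-- Clearing the denominator `p₀` in the Lagrange condition `c / p₀ = a (3 p₀² + 2 p₀)`. -/
noncomputable def lagrangeCubic {K : Type*} [Field K] (a c : K) : K[X] :=
  C a * (3 * X ^ 3 + 2 * X ^ 2) - C c

section

variable {K : Type*} [Field K]

theorem div_eq_iff_isRoot_lagrangeCubic (a c : K) {x : K} (hx : x ≠ 0) :
    c / x = a * (3 * x ^ 2 + 2 * x) ↔ (lagrangeCubic a c).IsRoot x := by
  simp only [lagrangeCubic, IsRoot, eval_sub, eval_mul, eval_add, eval_C, eval_pow, eval_X,
    eval_ofNat, sub_eq_zero, div_eq_iff hx]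
  constructor <;> intro h <;> linear_combination -h

theorem natDegree_lagrangeCubic [NeZero (3 : K)] (c : K) {a : K} (ha : a ≠ 0) :
    (lagrangeCubic a c).natDegree = 3 := by
  unfold lagrangeCubic
  compute_degree!
  exact ⟨ha, NeZero.ne 3⟩

theorem degree_lagrangeCubic [NeZero (3 : K)] (c : K) {a : K} (ha : a ≠ 0) :
    (lagrangeCubic a c).degree = 3 := by
  have hne : lagrangeCubic a c ≠ 0 := fun h => by
    simpa [h] using natDegree_lagrangeCubic c ha
  rw [degree_eq_natDegree hne, natDegree_lagrangeCubic c ha]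
  rfl

theorem card_roots_lagrangeCubic [IsAlgClosed K] [NeZero (3 : K)] (c : K) {a : K} (ha : a ≠ 0) :
    (lagrangeCubic a c).roots.card = 3 := by
  rw [IsAlgClosed.card_roots_eq_natDegree, natDegree_lagrangeCubic c ha]

end

theorem stmt_9_general (u₀ u₁ : ℕ)
    (lam : ℂ) (hlam : lam ≠ 0) :
    (∀ p₀ : ℂ, p₀ ≠ 0 →
      ((3 * u₀ + 2 * u₁ : ℂ) / p₀ = lam * (3 * p₀ ^ 2 + 2 * p₀) ↔
        (C lam * (3 * X ^ 3 + 2 * X ^ 2) - C (3 * u₀ + 2 * u₁ : ℂ)).IsRoot p₀)) ∧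
    (C lam * (3 * X ^ 3 + 2 * X ^ 2) - C (3 * u₀ + 2 * u₁ : ℂ)).degree = 3 ∧
    (C lam * (3 * X ^ 3 + 2 * X ^ 2) - C (3 * u₀ + 2 * u₁ : ℂ)).roots.card = 3 :=
  ⟨fun _ hp₀ => div_eq_iff_isRoot_lagrangeCubic lam _ hp₀,
    degree_lagrangeCubic _ hlam, card_roots_lagrangeCubic _ hlam⟩

theorem stmt_9 (u₀ u₁ : ℕ) (hu₀ : 0 < u₀) (hu₁ : 0 < u₁)
    (lam : ℂ) (hlam : lam ≠ 0) :
    (∀ p₀ : ℂ, p₀ ≠ 0 →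
      ((3 * u₀ + 2 * u₁ : ℂ) / p₀ = lam * (3 * p₀ ^ 2 + 2 * p₀) ↔
        (C lam * (3 * X ^ 3 + 2 * X ^ 2) - C (3 * u₀ + 2 * u₁ : ℂ)).IsRoot p₀)) ∧
    (C lam * (3 * X ^ 3 + 2 * X ^ 2) - C (3 * u₀ + 2 * u₁ : ℂ)).degree = 3 ∧
    (C lam * (3 * X ^ 3 + 2 * X ^ 2) - C (3 * u₀ + 2 * u₁ : ℂ)).roots.card = 3 :=
  stmt_9_general u₀ u₁ lam hlam
end

section
/- Let $f = \lambda(3p_0^2 + p_1) p_0 - (3u_0 + u_2)$ and $g = \lambda(3p_1^2 + p_0) p_1 - (3u_1 + u_2)$ be the critical equations (cleared of denominators) for the log-likelihood $3u_0 \log p_0 + 3u_1 \log p_1 + u_2 \log(p_0 p_1)$ under the constraint $p_0^3 + p_1^3 + p_0 p_1 = 1$. For generic parameters $u_0, u_1, u_2$ and $\lambda \neq 0$, the resultant $\mathrm{Res}(f, g, p_0)$ is a polynomial of degree $9$ in $p_1$ with nonzero leading coefficient, hence has exactly $9$ complex roots counted with multiplicity. -/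
open Polynomial

/- The critical equation `g` is linear in `p₀`, so the resultant is `b₁³ f(-b₀/b₁)` up to sign,
where `g = b₁ p₀ + b₀` with `b₁ = λp₁`, `b₀ = 3λp₁³ - (3u₁ + u₂)`. Its top-degree term is
`3λ · (3λp₁³)³ = 81λ⁴p₁⁹`, which is nonzero as soon as `λ ≠ 0`; over `ℂ` every polynomial
splits, so the number of roots equals the degree. -/

theorem Matrix.det_sylvester_cubic_linear {R : Type*} [CommRing R] (a₃ a₂ a₁ a₀ b₁ b₀ : R) :
    Matrix.det !![a₃, a₂, a₁, a₀; b₁, b₀, 0, 0; 0, b₁, b₀, 0; 0, 0, b₁, b₀]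
      = a₃ * b₀ ^ 3 - a₂ * b₁ * b₀ ^ 2 + a₁ * b₁ ^ 2 * b₀ - a₀ * b₁ ^ 3 := by
  simp [Matrix.det_succ_row_zero, Fin.sum_univ_succ, Fin.succAbove]
  ring

theorem degree_det_sylvester_critical {K : Type*} [Field K] (h3 : (3 : K) ≠ 0) {lam : K}
    (hlam : lam ≠ 0) (a c : K) :
    (Matrix.det !![C (3 * lam), 0, C lam * X, C (-a);
                   C lam * X, C (3 * lam) * X ^ 3 - C c, 0, 0;
                   0, C lam * X, C (3 * lam) * X ^ 3 - C c, 0;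
                   0, 0, C lam * X, C (3 * lam) * X ^ 3 - C c]).degree = 9 := by
  rw [Matrix.det_sylvester_cubic_linear]
  compute_degree!

theorem stmt_10_general (u₀ u₁ u₂ : ℝ)
    (lam : ℂ) (hlam : lam ≠ 0) :
    (Matrix.det !![C (3 * lam), 0, C lam * X, C (-(3 * (u₀ : ℂ) + u₂));
                   C lam * X, C (3 * lam) * X ^ 3 - C (3 * (u₁ : ℂ) + u₂), 0, 0;
                   0, C lam * X, C (3 * lam) * X ^ 3 - C (3 * (u₁ : ℂ) + u₂), 0;
                   0, 0, C lam * X, C (3 * lam) * X ^ 3 - C (3 * (u₁ : ℂ) + u₂)]).degree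
      = 9 ∧
    (Matrix.det !![C (3 * lam), 0, C lam * X, C (-(3 * (u₀ : ℂ) + u₂));
                   C lam * X, C (3 * lam) * X ^ 3 - C (3 * (u₁ : ℂ) + u₂), 0, 0;
                   0, C lam * X, C (3 * lam) * X ^ 3 - C (3 * (u₁ : ℂ) + u₂), 0;
                   0, 0, C lam * X, C (3 * lam) * X ^ 3 - C (3 * (u₁ : ℂ) + u₂)]).leadingCoeff
      ≠ 0 ∧
    (Matrix.det !![C (3 * lam), 0, C lam * X, C (-(3 * (u₀ : ℂ) + u₂));
                   C lam * X, C (3 * lam) * X ^ 3 - C (3 * (u₁ : ℂ) + u₂), 0, 0;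
                   0, C lam * X, C (3 * lam) * X ^ 3 - C (3 * (u₁ : ℂ) + u₂), 0;
                   0, 0, C lam * X, C (3 * lam) * X ^ 3 - C (3 * (u₁ : ℂ) + u₂)]).roots.card
      = 9 := by
  have hdeg := degree_det_sylvester_critical three_ne_zero hlam
    (3 * (u₀ : ℂ) + u₂) (3 * (u₁ : ℂ) + u₂)
  refine ⟨hdeg, leadingCoeff_ne_zero.mpr (ne_zero_of_degree_gt (n := 0) (by rw [hdeg]; decide)), ?_⟩
  rw [IsAlgClosed.card_roots_eq_natDegree, natDegree_eq_of_degree_eq_some hdeg]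

theorem stmt_10 (u₀ u₁ u₂ : ℝ) (hu₀ : 0 < u₀) (hu₁ : 0 < u₁) (hu₂ : 0 < u₂)
    (lam : ℂ) (hlam : lam ≠ 0) :
    (Matrix.det !![C (3 * lam), 0, C lam * X, C (-(3 * (u₀ : ℂ) + u₂));
                   C lam * X, C (3 * lam) * X ^ 3 - C (3 * (u₁ : ℂ) + u₂), 0, 0;
                   0, C lam * X, C (3 * lam) * X ^ 3 - C (3 * (u₁ : ℂ) + u₂), 0;
                   0, 0, C lam * X, C (3 * lam) * X ^ 3 - C (3 * (u₁ : ℂ) + u₂)]).degree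
      = 9 ∧
    (Matrix.det !![C (3 * lam), 0, C lam * X, C (-(3 * (u₀ : ℂ) + u₂));
                   C lam * X, C (3 * lam) * X ^ 3 - C (3 * (u₁ : ℂ) + u₂), 0, 0;
                   0, C lam * X, C (3 * lam) * X ^ 3 - C (3 * (u₁ : ℂ) + u₂), 0;
                   0, 0, C lam * X, C (3 * lam) * X ^ 3 - C (3 * (u₁ : ℂ) + u₂)]).leadingCoeff
      ≠ 0 ∧
    (Matrix.det !![C (3 * lam), 0, C lam * X, C (-(3 * (u₀ : ℂ) + u₂));
                   C lam * X, C (3 * lam) * X ^ 3 - C (3 * (u₁ : ℂ) + u₂), 0, 0;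
                   0, C lam * X, C (3 * lam) * X ^ 3 - C (3 * (u₁ : ℂ) + u₂), 0;
                   0, 0, C lam * X, C (3 * lam) * X ^ 3 - C (3 * (u₁ : ℂ) + u₂)]).roots.card
      = 9 :=
  stmt_10_general u₀ u₁ u₂ lam hlam
end

section
/- Let $u_0, u_1, u_2 > 0$ and $K > 0$. The constrained critical equations for the log-likelihood $(2u_0 + u_2)\log t_0 + (2u_1 + 3u_2)\log t_1 + u_2 \log\sqrt{K}$ subject to $t_0^2 + t_1^2 + \sqrt{K}\, t_0 t_1^3 = 1$ reduce, via elimination of $t_0$ by a resultant, to a polynomial of degree $8$ in $t_1$ with nonzero leading coefficient; hence the number of complex critical points (counted with multiplicity) is $8$. -/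
open Polynomial

/-! The resultant of `a t² + b t + d` and `e t + g` in `t` is `a g² - b e g + d e²`. Here
`b = √K λ t₁³` and `e = 3√K λ t₁³` are cubic and `g = 2λ t₁² - (2u₁ + 3u₂)` is quadratic in `t₁`,
so the middle term dominates with leading coefficient `-6Kλ³ ≠ 0`; over `ℂ` a polynomial of
degree 8 has 8 roots. -/

theorem Matrix.det_sylvester_quadratic_linear {R : Type*} [CommRing R] (a b d e g : R) :
    !![a, b, d; e, g, 0; 0, e, g].det = a * g ^ 2 - b * e * g + d * e ^ 2 := by
  simp [Matrix.det_fin_three]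
  ring

theorem degree_det_lagrange_sylvester {F : Type*} [Field F] [CharZero F] {s lam : F}
    (hs : s ≠ 0) (hlam : lam ≠ 0) (A B : F) :
    (!![C (2 * lam), C (s * lam) * X ^ 3, C (-A);
        C (3 * s * lam) * X ^ 3, C (2 * lam) * X ^ 2 - C B, 0;
        0, C (3 * s * lam) * X ^ 3, C (2 * lam) * X ^ 2 - C B]).det.degree = 8 := by
  rw [Matrix.det_sylvester_quadratic_linear]
  compute_degree!

theorem stmt_17_general (u₀ u₁ u₂ K : ℝ)
    (hK : 0 < K) (lam : ℂ) (hlam : lam ≠ 0) :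
    (Matrix.det !![C (2 * lam), C ((Real.sqrt K : ℂ) * lam) * X ^ 3,
                     C (-(2 * (u₀ : ℂ) + u₂));
                   C (3 * (Real.sqrt K : ℂ) * lam) * X ^ 3,
                     C (2 * lam) * X ^ 2 - C (2 * (u₁ : ℂ) + 3 * u₂), 0;
                   0, C (3 * (Real.sqrt K : ℂ) * lam) * X ^ 3,
                     C (2 * lam) * X ^ 2 - C (2 * (u₁ : ℂ) + 3 * u₂)]).degree = 8 ∧
    (Matrix.det !![C (2 * lam), C ((Real.sqrt K : ℂ) * lam) * X ^ 3,
                     C (-(2 * (u₀ : ℂ) + u₂));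
                   C (3 * (Real.sqrt K : ℂ) * lam) * X ^ 3,
                     C (2 * lam) * X ^ 2 - C (2 * (u₁ : ℂ) + 3 * u₂), 0;
                   0, C (3 * (Real.sqrt K : ℂ) * lam) * X ^ 3,
                     C (2 * lam) * X ^ 2 - C (2 * (u₁ : ℂ) + 3 * u₂)]).leadingCoeff ≠ 0 ∧
    (Matrix.det !![C (2 * lam), C ((Real.sqrt K : ℂ) * lam) * X ^ 3,
                     C (-(2 * (u₀ : ℂ) + u₂));
                   C (3 * (Real.sqrt K : ℂ) * lam) * X ^ 3,
                     C (2 * lam) * X ^ 2 - C (2 * (u₁ : ℂ) + 3 * u₂), 0;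
                   0, C (3 * (Real.sqrt K : ℂ) * lam) * X ^ 3,
                     C (2 * lam) * X ^ 2 - C (2 * (u₁ : ℂ) + 3 * u₂)]).roots.card = 8 := by
  have hs : (Real.sqrt K : ℂ) ≠ 0 := by exact_mod_cast (Real.sqrt_pos.2 hK).ne'
  have hdeg := degree_det_lagrange_sylvester hs hlam (2 * u₀ + u₂) (2 * u₁ + 3 * u₂)
  refine ⟨hdeg, leadingCoeff_ne_zero.2 (ne_zero_of_coe_le_degree hdeg.ge), ?_⟩
  rw [IsAlgClosed.card_roots_eq_natDegree, natDegree_eq_of_degree_eq_some hdeg]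

theorem stmt_17 (u₀ u₁ u₂ K : ℝ) (hu₀ : 0 < u₀) (hu₁ : 0 < u₁) (hu₂ : 0 < u₂)
    (hK : 0 < K) (lam : ℂ) (hlam : lam ≠ 0) :
    (Matrix.det !![C (2 * lam), C ((Real.sqrt K : ℂ) * lam) * X ^ 3,
                     C (-(2 * (u₀ : ℂ) + u₂));
                   C (3 * (Real.sqrt K : ℂ) * lam) * X ^ 3,
                     C (2 * lam) * X ^ 2 - C (2 * (u₁ : ℂ) + 3 * u₂), 0;
                   0, C (3 * (Real.sqrt K : ℂ) * lam) * X ^ 3,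
                     C (2 * lam) * X ^ 2 - C (2 * (u₁ : ℂ) + 3 * u₂)]).degree = 8 ∧
    (Matrix.det !![C (2 * lam), C ((Real.sqrt K : ℂ) * lam) * X ^ 3,
                     C (-(2 * (u₀ : ℂ) + u₂));
                   C (3 * (Real.sqrt K : ℂ) * lam) * X ^ 3,
                     C (2 * lam) * X ^ 2 - C (2 * (u₁ : ℂ) + 3 * u₂), 0;
                   0, C (3 * (Real.sqrt K : ℂ) * lam) * X ^ 3,
                     C (2 * lam) * X ^ 2 - C (2 * (u₁ : ℂ) + 3 * u₂)]).leadingCoeff ≠ 0 ∧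
    (Matrix.det !![C (2 * lam), C ((Real.sqrt K : ℂ) * lam) * X ^ 3,
                     C (-(2 * (u₀ : ℂ) + u₂));
                   C (3 * (Real.sqrt K : ℂ) * lam) * X ^ 3,
                     C (2 * lam) * X ^ 2 - C (2 * (u₁ : ℂ) + 3 * u₂), 0;
                   0, C (3 * (Real.sqrt K : ℂ) * lam) * X ^ 3,
                     C (2 * lam) * X ^ 2 - C (2 * (u₁ : ℂ) + 3 * u₂)]).roots.card = 8 :=
  stmt_17_general u₀ u₁ u₂ K hK lam hlam
end
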